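/- For an arc-covering p : E → B, the relation on loops at b₀ ∈ B given by α ∼ β iff any two lifts of α and β starting at the same point end at the same point is an equivalence relation, and concatenation induces a well-defined group structure on the set of equivalence classes (the monodromy group π(p,b₀)). -/

import Mathlib

open unitInterval Topology

set_option linter.unnecessarySimpa false

universe u v w

/-- `p : E → B` is an arc-covering: unique lifting of paths given the initial point. -/
def IsArcCovering {E : Type*} {B : Type*} [TopologicalSpace E] [TopologicalSpace B]
    (p : C(E, B)) : Prop :=
  ∀ (e₀ : E) (f : C(I, B)), f 0 = p e₀ →
    ∃! g : C(I, E), p.comp g = f ∧ g 0 = e₀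

/-- The relation identifying the wedge points of a wedge of copies of `(A, a₀)` indexed by `S`. -/
def wedgeRel (S A : Type*) (a₀ : A) (x y : S × A) : Prop :=
  x = y ∨ (x.2 = a₀ ∧ y.2 = a₀)

/-- The wedge (one-point union) of copies of `(A, a₀)` indexed by `S`. -/
def Wedge (S A : Type*) (a₀ : A) : Type _ :=
  Quot (wedgeRel S A a₀)

/-- The topology of a directed wedge: a set is open iff its trace on each copy of `A`
is open, and if it contains the wedge point then it contains all copies of `A`
beyond some index. -/
instance Wedge.instTopologicalSpace (S A : Type*) (a₀ : A) [Preorder S]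
    [IsDirected S (· ≤ ·)] [TopologicalSpace A] : TopologicalSpace (Wedge S A a₀) where
  IsOpen U := (∀ s : S, IsOpen {a : A | Quot.mk (wedgeRel S A a₀) (s, a) ∈ U}) ∧
    ((∃ s : S, Quot.mk (wedgeRel S A a₀) (s, a₀) ∈ U) →
      ∃ t : S, ∀ s : S, t < s → ∀ a : A, Quot.mk (wedgeRel S A a₀) (s, a) ∈ U)
  isOpen_univ := by
    refine ⟨fun s => ?_, fun h => ?_⟩
    · first
        | exact isOpen_univ
        | simpa using (isOpen_univ (X := A))
        | (have h : {a : A | Quot.mk (wedgeRel S A a₀) (s, a) ∈ (Set.univ : Set (Wedge S A a₀))}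
              = Set.univ := Set.eq_univ_of_forall fun _ => Set.mem_univ _
           rw [h]; exact isOpen_univ)
    · obtain ⟨s, -⟩ := h
      exact ⟨s, fun _ _ _ => trivial⟩
  isOpen_inter := by
    rintro U V ⟨hU1, hU2⟩ ⟨hV1, hV2⟩
    refine ⟨fun s => (hU1 s).inter (hV1 s), fun h => ?_⟩
    obtain ⟨tU, htU⟩ := hU2 ⟨h.choose, h.choose_spec.1⟩
    obtain ⟨tV, htV⟩ := hV2 ⟨h.choose, h.choose_spec.2⟩
    obtain ⟨t, ht1, ht2⟩ := directed_of (· ≤ ·) tU tV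
    exact ⟨t, fun s hs a => ⟨htU s (lt_of_le_of_lt ht1 hs) a, htV s (lt_of_le_of_lt ht2 hs) a⟩⟩
  isOpen_sUnion := by
    intro C hC
    constructor
    · intro s
      have : {a : A | Quot.mk (wedgeRel S A a₀) (s, a) ∈ ⋃₀ C} =
          ⋃ U ∈ C, {a : A | Quot.mk (wedgeRel S A a₀) (s, a) ∈ U} := by
        ext a
        simp only [Set.mem_setOf_eq, Set.mem_sUnion, Set.mem_iUnion, exists_prop]
        exact Iff.rfl
      rw [this]
      exact isOpen_biUnion fun U hU => (hC U hU).1 s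
    · rintro ⟨s, hs⟩
      obtain ⟨U, hUC, hsU⟩ := hs
      obtain ⟨t, ht⟩ := (hC U hUC).2 ⟨s, hsU⟩
      exact ⟨t, fun s' hs' a => ⟨U, hUC, ht s' hs' a⟩⟩

/-- An arc-hedgehog over a directed set `S`: the directed wedge of copies of `([0,1], 0)`. -/
def ArcHedgehog (S : Type*) : Type _ := Wedge S I 0

instance (S : Type*) [Preorder S] [IsDirected S (· ≤ ·)] : TopologicalSpace (ArcHedgehog S) :=
  Wedge.instTopologicalSpace S I 0

/-- `p` is an arc-hedgehog covering: maps from arc-hedgehogs lift uniquely. -/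
def IsArcHedgehogCovering {E : Type*} {B : Type*} [TopologicalSpace E] [TopologicalSpace B]
    (p : C(E, B)) : Prop :=
  ∀ (S : Type u) [Preorder S] [IsDirected S (· ≤ ·)],
    ∀ (e₀ : E) (f : C(ArcHedgehog S, B)) (z₀ : ArcHedgehog S), f z₀ = p e₀ →
      ∃! g : C(ArcHedgehog S, E), p.comp g = f ∧ g z₀ = e₀

/-- The closed unit `2`-disk. -/
noncomputable def Disk : Type := Metric.closedBall (0 : EuclideanSpace ℝ (Fin 2)) 1

noncomputable instance : TopologicalSpace Disk := by unfold Disk; infer_instance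

/-- The center of the disk. -/
noncomputable def Disk.center : Disk := ⟨0, by simp⟩

/-- A disk-hedgehog over a directed set `S`: the directed wedge of copies of the pointed disk. -/
def DiskHedgehog (S : Type*) : Type _ := Wedge S Disk Disk.center

noncomputable instance (S : Type*) [Preorder S] [IsDirected S (· ≤ ·)] : TopologicalSpace (DiskHedgehog S) :=
  Wedge.instTopologicalSpace S Disk Disk.center

/-- `p` is a disk-hedgehog covering: maps from disk-hedgehogs lift uniquely. -/
def IsDiskHedgehogCovering {E : Type*} {B : Type*} [TopologicalSpace E] [TopologicalSpace B]
    (p : C(E, B)) : Prop :=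
  ∀ (S : Type u) [Preorder S] [IsDirected S (· ≤ ·)],
    ∀ (e₀ : E) (f : C(DiskHedgehog S, B)) (z₀ : DiskHedgehog S), f z₀ = p e₀ →
      ∃! g : C(DiskHedgehog S, E), p.comp g = f ∧ g z₀ = e₀

/-- `p` is a disk-covering: maps from the closed `2`-disk lift uniquely. -/
def IsDiskCovering {E : Type*} {B : Type*} [TopologicalSpace E] [TopologicalSpace B]
    (p : C(E, B)) : Prop :=
  ∀ (e₀ : E) (f : C(Disk, B)) (d₀ : Disk), f d₀ = p e₀ →
    ∃! g : C(Disk, E), p.comp g = f ∧ g d₀ = e₀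

/-- Path components of preimages of neighborhoods form a neighborhood basis of the
total space. -/
def HedgehogBasisCondition {E : Type*} {B : Type*} [TopologicalSpace E] [TopologicalSpace B]
    (p : C(E, B)) : Prop :=
  ∀ (e₀ : E) (U : Set E), IsOpen U → e₀ ∈ U →
    ∃ V ∈ 𝓝 (p e₀), {y : E | JoinedIn (p ⁻¹' V) e₀ y} ⊆ U

/-- The monodromy relation on loops at `b₀`: two loops are identified iff any two of
their lifts starting at the same point end at the same point. -/
def MonodromyRel {E : Type*} {B : Type*} [TopologicalSpace E] [TopologicalSpace B]
    (p : C(E, B)) (b₀ : B) (α β : Path b₀ b₀) : Prop :=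
  ∀ g h : C(I, E), (∀ t, p (g t) = α t) → (∀ t, p (h t) = β t) →
    g 0 = h 0 → g 1 = h 1

/-- `p` is regular: for each loop in `B`, all lifts are loops or all lifts are non-loops. -/
def IsRegularCovering {E : Type*} {B : Type*} [TopologicalSpace E] [TopologicalSpace B]
    (p : C(E, B)) : Prop :=
  ∀ (b : B) (α : Path b b) (g h : C(I, E)),
    (∀ t, p (g t) = α t) → (∀ t, p (h t) = α t) → g 0 = g 1 → h 0 = h 1

/-!
Lifting a loop `α` at `b₀` from each point of the fibre `p ⁻¹' {b₀}` and taking endpoints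
defines a permutation of the fibre, the monodromy of `α`. By uniqueness of lifts, the monodromy
of `α.trans β` is the composite of those of `α` and `β`, that of the constant loop is the
identity and that of `α.symm` the inverse. Since `α ∼ β` means exactly that `α` and `β` have the
same monodromy, `∼` is an equivalence relation and its quotient is the set of monodromy
permutations, a subgroup of the permutation group of the fibre.
-/

open Function

theorem Quot.exists_group_of_map_mul {X G : Type*} [Group G] (f : X → G) (mul : X → X → X)
    (map_mul : ∀ a b, f (mul a b) = f a * f b) (one_mem : 1 ∈ Set.range f)
    (inv_mem : ∀ a, (f a)⁻¹ ∈ Set.range f) :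
    ∃ inst : Group (Quot (Eq on f)),
      ∀ a b, Quot.mk _ (mul a b) = inst.mul (Quot.mk _ a) (Quot.mk _ b) := by
  let H : Subgroup G :=
    { carrier := Set.range f
      mul_mem' := by
        rintro _ _ ⟨a, rfl⟩ ⟨b, rfl⟩
        exact ⟨mul a b, map_mul a b⟩
      one_mem' := one_mem
      inv_mem' := by
        rintro _ ⟨a, rfl⟩
        exact inv_mem a }
  let toH : Quot (Eq on f) → H := Quot.lift (fun a => ⟨f a, a, rfl⟩) fun _ _ h => Subtype.ext h
  have toH_bijective : Function.Bijective toH := by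
    refine ⟨fun x y hxy => ?_, fun ⟨_, a, rfl⟩ => ⟨Quot.mk _ a, rfl⟩⟩
    induction x using Quot.ind
    induction y using Quot.ind
    exact Quot.sound (congrArg Subtype.val hxy)
  let e := Equiv.ofBijective toH toH_bijective
  refine ⟨e.group, fun a b => ?_⟩
  change _ = e.symm (e _ * e _)
  exact e.eq_symm_apply.2 (Subtype.ext (map_mul a b))

namespace IsArcCovering

variable {E B : Type*} [TopologicalSpace E] [TopologicalSpace B] {p : C(E, B)}
  (hp : IsArcCovering p)

noncomputable def lift (f : C(I, B)) (e : E) (he : f 0 = p e) : C(I, E) :=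
  (hp e f he).choose

theorem apply_lift (f : C(I, B)) (e : E) (he : f 0 = p e) (t : I) :
    p (hp.lift f e he t) = f t :=
  DFunLike.congr_fun (hp e f he).choose_spec.1.1 t

theorem lift_zero (f : C(I, B)) (e : E) (he : f 0 = p e) : hp.lift f e he 0 = e :=
  (hp e f he).choose_spec.1.2

theorem eq_lift {f : C(I, B)} {e : E} (he : f 0 = p e) {g : C(I, E)} (hg : ∀ t, p (g t) = f t)
    (h0 : g 0 = e) : g = hp.lift f e he :=
  (hp e f he).choose_spec.2 g ⟨ContinuousMap.ext hg, h0⟩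

variable {b₀ b₁ b₂ : B}

noncomputable def transport (γ : Path b₀ b₁) (e : p ⁻¹' {b₀}) : p ⁻¹' {b₁} :=
  ⟨hp.lift γ e (γ.source.trans e.2.symm) 1, (hp.apply_lift _ _ _ 1).trans γ.target⟩

noncomputable def liftPath (γ : Path b₀ b₁) (e : p ⁻¹' {b₀}) :
    Path (e : E) (hp.transport γ e) where
  toContinuousMap := hp.lift γ e (γ.source.trans e.2.symm)
  source' := hp.lift_zero _ _ _
  target' := rfl

theorem apply_liftPath (γ : Path b₀ b₁) (e : p ⁻¹' {b₀}) (t : I) :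
    p (hp.liftPath γ e t) = γ t :=
  hp.apply_lift _ _ (γ.source.trans e.2.symm) t

theorem transport_eq_of_lift (γ : Path b₀ b₁) (e : p ⁻¹' {b₀}) {g : C(I, E)}
    (hg : ∀ t, p (g t) = γ t) (h0 : g 0 = e) : (hp.transport γ e : E) = g 1 := by
  rw [hp.eq_lift (γ.source.trans e.2.symm) hg h0]
  rfl

theorem transport_refl (e : p ⁻¹' {b₀}) : hp.transport (Path.refl b₀) e = e :=
  Subtype.ext <| hp.transport_eq_of_lift _ e (g := ContinuousMap.const I (e : E))
    (fun _ => e.2) rfl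

theorem transport_trans (γ : Path b₀ b₁) (δ : Path b₁ b₂) (e : p ⁻¹' {b₀}) :
    hp.transport (γ.trans δ) e = hp.transport δ (hp.transport γ e) := by
  let g := (hp.liftPath γ e).trans (hp.liftPath δ (hp.transport γ e))
  have hg : ∀ t, p (g t) = γ.trans δ t := by
    intro t
    simp only [g, Path.trans_apply]
    split_ifs <;> exact hp.apply_liftPath _ _ _
  exact Subtype.ext <| (hp.transport_eq_of_lift _ e hg g.source).trans g.target

theorem transport_symm_transport (γ : Path b₀ b₁) (e : p ⁻¹' {b₀}) :
    hp.transport γ.symm (hp.transport γ e) = e := by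
  let g := (hp.liftPath γ e).symm
  have hg : ∀ t, p (g t) = γ.symm t := fun t => hp.apply_liftPath γ e _
  exact Subtype.ext <| (hp.transport_eq_of_lift _ _ hg g.source).trans g.target

noncomputable def transportEquiv (γ : Path b₀ b₁) : p ⁻¹' {b₀} ≃ p ⁻¹' {b₁} where
  toFun := hp.transport γ
  invFun := hp.transport γ.symm
  left_inv := hp.transport_symm_transport γ
  right_inv e := by simpa using hp.transport_symm_transport γ.symm e

theorem transportEquiv_trans (γ : Path b₀ b₁) (δ : Path b₁ b₂) :
    hp.transportEquiv (γ.trans δ) = (hp.transportEquiv γ).trans (hp.transportEquiv δ) :=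
  Equiv.ext (hp.transport_trans γ δ)

/-- Taken in the opposite group because `α.trans β` transports along `α` first. -/
noncomputable def monodromy (α : Path b₀ b₀) : (Equiv.Perm (p ⁻¹' {b₀}))ᵐᵒᵖ :=
  .op (hp.transportEquiv α)

theorem monodromy_trans (α β : Path b₀ b₀) :
    hp.monodromy (α.trans β) = hp.monodromy α * hp.monodromy β := by
  rw [monodromy, transportEquiv_trans, ← Equiv.Perm.mul_def, MulOpposite.op_mul]
  rfl

theorem monodromy_refl : hp.monodromy (Path.refl b₀) = 1 :=
  MulOpposite.unop_injective <| Equiv.ext hp.transport_refl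

theorem monodromy_symm (α : Path b₀ b₀) : hp.monodromy α.symm = (hp.monodromy α)⁻¹ :=
  MulOpposite.unop_injective <| Equiv.ext fun _ => rfl

theorem monodromyRel_eq : MonodromyRel p b₀ = (Eq on hp.monodromy) := by
  ext α β
  refine ⟨fun h => ?_, fun h g g' hg hg' h0 => ?_⟩
  · refine congrArg MulOpposite.op (Equiv.ext fun e => Subtype.ext ?_)
    exact h _ _ (hp.apply_liftPath α e) (hp.apply_liftPath β e)
      ((hp.liftPath α e).source.trans (hp.liftPath β e).source.symm)
  · have he : g 0 ∈ p ⁻¹' {b₀} := (hg 0).trans α.source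
    have h' : hp.transport α = hp.transport β := congrArg DFunLike.coe (MulOpposite.op_injective h)
    calc g 1 = hp.transport α ⟨g 0, he⟩ := (hp.transport_eq_of_lift α _ hg rfl).symm
      _ = hp.transport β ⟨g 0, he⟩ := by rw [h']
      _ = g' 1 := hp.transport_eq_of_lift β _ hg' h0.symm

end IsArcCovering

/-- the monodromy relation is an equivalence relation and concatenation
induces a group structure on the quotient (the monodromy group `π(p, b₀)`). -/
theorem monodromy_group_exists {E B : Type*} [TopologicalSpace E] [TopologicalSpace B]
    (p : C(E, B)) (hp : IsArcCovering p) (b₀ : B) :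
    Equivalence (MonodromyRel p b₀) ∧
      ∃ instG : Group (Quot (MonodromyRel p b₀)),
        ∀ α β : Path b₀ b₀,
          Quot.mk (MonodromyRel p b₀) (α.trans β) =
            instG.mul (Quot.mk (MonodromyRel p b₀) α) (Quot.mk (MonodromyRel p b₀) β) := by
  rw [hp.monodromyRel_eq]
  refine ⟨eq_equivalence.comap _, Quot.exists_group_of_map_mul _ _ hp.monodromy_trans ?_ ?_⟩
  · exact ⟨Path.refl b₀, hp.monodromy_refl⟩
  · exact fun α => ⟨α.symm, hp.monodromy_symm α⟩
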